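/- arXiv:2111.02990 — 8 statements merged into one kernel-verified Lean document; each statement's English description precedes it below -/
import Mathlib

section
/- For a C^2 function f : ℝ → ℝ, the diagonal partial derivative of the first divided difference satisfies ∂f^[1]/∂x (x,x) = f''(x)/2. -/
/-- First divided difference of `f`. -/
noncomputable def divDiff (f : ℝ → ℝ) (x y : ℝ) : ℝ :=
  if x = y then deriv f x else (f x - f y) / (x - y)

/-- For a `C^2` function `f : ℝ → ℝ`, the partial derivative in the first variable of the
first divided difference on the diagonal equals `f''(x)/2`. -/
theorem divDiff_deriv_diag (f : ℝ → ℝ) (hf : ContDiff ℝ 2 f) (x : ℝ) :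
    deriv (fun t => divDiff f t x) x = deriv (deriv f) x / 2 := by
  have hfd : Differentiable ℝ f := hf.differentiable (by norm_num)
  have hfd' : DifferentiableAt ℝ (deriv f) x := by
    have := (hf.iterate_deriv' 1 1).differentiable (by norm_num)
    simpa using this x
  set g : ℝ → ℝ := fun t => f t - f x - deriv f x * (t - x) with hg
  set h : ℝ → ℝ := fun t => (t - x) ^ 2 with hh
  have hgd : ∀ t : ℝ, HasDerivAt g (deriv f t - deriv f x) t := by
    intro t
    have h1 : HasDerivAt f (deriv f t) t := (hfd t).hasDerivAt
    have h2 : HasDerivAt (fun t : ℝ => f x + deriv f x * (t - x)) (deriv f x) t := by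
      have : HasDerivAt (fun t : ℝ => t - x) 1 t := (hasDerivAt_id t).sub_const x
      simpa using ((this.const_mul (deriv f x)).const_add (f x))
    have e : g = fun t => f t - (f x + deriv f x * (t - x)) := by
      funext s; simp only [hg]; ring
    rw [e]; exact h1.sub h2
  have hhd : ∀ t : ℝ, HasDerivAt h (2 * (t - x)) t := by
    intro t
    have : HasDerivAt (fun t : ℝ => t - x) 1 t := (hasDerivAt_id t).sub_const x
    have e : h = fun s => (s - x) * (s - x) := by
      funext s; simp only [hh]; ring
    rw [e]; exact (this.mul this).congr_deriv (by ring)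
  -- L'Hopital
  have hdiv : Filter.Tendsto (fun t => (deriv f t - deriv f x) / (2 * (t - x)))
      (nhdsWithin x {x}ᶜ) (nhds (deriv (deriv f) x / 2)) := by
    have hslope : Filter.Tendsto (slope (deriv f) x) (nhdsWithin x {x}ᶜ)
        (nhds (deriv (deriv f) x)) :=
      hasDerivAt_iff_tendsto_slope.1 hfd'.hasDerivAt
    have := hslope.div_const 2
    refine this.congr fun t => ?_
    rw [slope_def_field]
    field_simp
  have hratio : Filter.Tendsto (fun t => g t / h t) (nhdsWithin x {x}ᶜ)
      (nhds (deriv (deriv f) x / 2)) := by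
    apply HasDerivAt.lhopital_zero_nhdsNE (f' := fun t => deriv f t - deriv f x)
      (g' := fun t => 2 * (t - x))
    · exact Filter.Eventually.of_forall hgd
    · exact Filter.Eventually.of_forall hhd
    · filter_upwards [self_mem_nhdsWithin] with t ht
      simp only [Set.mem_compl_iff, Set.mem_singleton_iff] at ht
      intro hc
      apply ht
      have : t - x = 0 := by linarith [mul_eq_zero.1 hc]
      linarith
    · have : Filter.Tendsto g (nhds x) (nhds (g x)) := (hgd x).continuousAt
      simpa [hg] using this.mono_left nhdsWithin_le_nhds
    · have : Filter.Tendsto h (nhds x) (nhds (h x)) := (hhd x).continuousAt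
      simpa [hh] using this.mono_left nhdsWithin_le_nhds
    · exact hdiv
  -- the function equals dslope f x
  have hfun : (fun t => divDiff f t x) = dslope f x := by
    funext t
    rcases eq_or_ne t x with rfl | ht
    · simp [divDiff, dslope_same]
    · rw [divDiff, if_neg ht, dslope_of_ne f ht, slope_def_field]
  have hda : HasDerivAt (dslope f x) (deriv (deriv f) x / 2) x := by
    rw [hasDerivAt_iff_tendsto_slope]
    refine hratio.congr' ?_
    filter_upwards [self_mem_nhdsWithin] with t ht
    simp only [Set.mem_compl_iff, Set.mem_singleton_iff] at ht
    have htx : t - x ≠ 0 := sub_ne_zero.2 ht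
    rw [slope_def_field, dslope_of_ne f ht, dslope_same, slope_def_field]
    field_simp [hg, hh]
    ring
  rw [hfun, hda.deriv]
end

section
/- Let u, v : (0,∞) → ℝ be differentiable functions whose derivatives have constant sign (each derivative is everywhere positive or everywhere negative). Then for every n, every diagonal matrix D = diag(d₁,...,dₙ) with dᵢ > 0, the bilinear form on n×n symmetric matrices defined by g(X,Y) = (1/(u'(1)v'(1))) · Σ_{i,j} u^[1](dᵢ,dⱼ) v^[1](dᵢ,dⱼ) X_{ij} Y_{ij} is symmetric and positive definite. -/
/-- First divided difference of `u` built from a given derivative function `u'`. -/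
noncomputable def divDiff' (u u' : ℝ → ℝ) (x y : ℝ) : ℝ :=
  if x = y then u' x else (u x - u y) / (x - y)

lemma key_divDiff (u u' : ℝ → ℝ)
    (hu : ∀ x ∈ Set.Ioi (0:ℝ), HasDerivAt u (u' x) x)
    (hus : (∀ x ∈ Set.Ioi (0:ℝ), 0 < u' x) ∨ (∀ x ∈ Set.Ioi (0:ℝ), u' x < 0))
    {x y : ℝ} (hx : 0 < x) (hy : 0 < y) :
    0 < u' 1 * divDiff' u u' x y := by
  have h1 : (1:ℝ) ∈ Set.Ioi (0:ℝ) := by norm_num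
  have hcont : ContinuousOn u (Set.Ioi (0:ℝ)) :=
    fun z hz => (hu z hz).continuousAt.continuousWithinAt
  unfold divDiff'
  rcases hus with hpos | hneg
  · refine mul_pos (hpos 1 h1) ?_
    split_ifs with h
    · exact hpos x hx
    · have mono : StrictMonoOn u (Set.Ioi (0:ℝ)) := by
        refine strictMonoOn_of_deriv_pos (convex_Ioi 0) hcont ?_
        intro z hz
        rw [interior_Ioi] at hz
        rw [(hu z hz).deriv]; exact hpos z hz
      rcases lt_or_gt_of_ne h with hlt | hlt
      · exact div_pos_of_neg_of_neg (by linarith [mono hx hy hlt]) (by linarith)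
      · exact div_pos (by linarith [mono hy hx hlt]) (by linarith)
  · refine mul_pos_of_neg_of_neg (hneg 1 h1) ?_
    split_ifs with h
    · exact hneg x hx
    · have anti : StrictAntiOn u (Set.Ioi (0:ℝ)) := by
        refine strictAntiOn_of_deriv_neg (convex_Ioi 0) hcont ?_
        intro z hz
        rw [interior_Ioi] at hz
        rw [(hu z hz).deriv]; exact hneg z hz
      rcases lt_or_gt_of_ne h with hlt | hlt
      · exact div_neg_of_pos_of_neg (by linarith [anti hx hy hlt]) (by linarith)
      · exact div_neg_of_neg_of_pos (by linarith [anti hy hx hlt]) (by linarith)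

/-- The balanced bilinear form
`g(X,Y) = (1/(u'(1)v'(1))) Σ_{i,j} u^[1](dᵢ,dⱼ) v^[1](dᵢ,dⱼ) Xᵢⱼ Yᵢⱼ`
on symmetric matrices is symmetric and positive definite, whenever `u, v` are differentiable
on `(0,∞)` with derivatives of constant sign. -/
theorem balanced_form_pos_def (u u' v v' : ℝ → ℝ)
    (hu : ∀ x ∈ Set.Ioi (0:ℝ), HasDerivAt u (u' x) x)
    (hv : ∀ x ∈ Set.Ioi (0:ℝ), HasDerivAt v (v' x) x)
    (hus : (∀ x ∈ Set.Ioi (0:ℝ), 0 < u' x) ∨ (∀ x ∈ Set.Ioi (0:ℝ), u' x < 0))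
    (hvs : (∀ x ∈ Set.Ioi (0:ℝ), 0 < v' x) ∨ (∀ x ∈ Set.Ioi (0:ℝ), v' x < 0))
    (n : ℕ) (d : Fin n → ℝ) (hd : ∀ i, 0 < d i) :
    let g : Matrix (Fin n) (Fin n) ℝ → Matrix (Fin n) (Fin n) ℝ → ℝ := fun X Y =>
      (1 / (u' 1 * v' 1)) *
        ∑ i, ∑ j, divDiff' u u' (d i) (d j) * divDiff' v v' (d i) (d j) * X i j * Y i j
    (∀ X Y : Matrix (Fin n) (Fin n) ℝ, X.IsSymm → Y.IsSymm → g X Y = g Y X) ∧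
    (∀ X : Matrix (Fin n) (Fin n) ℝ, X.IsSymm → X ≠ 0 → 0 < g X X) := by
  intro g
  have hu1 : u' 1 ≠ 0 := by
    have := key_divDiff u u' hu hus (x := 1) (y := 1) one_pos one_pos
    simp [divDiff'] at this
    intro h; rw [h] at this; simp at this
  have hv1 : v' 1 ≠ 0 := by
    have := key_divDiff v v' hv hvs (x := 1) (y := 1) one_pos one_pos
    simp [divDiff'] at this
    intro h; rw [h] at this; simp at this
  constructor
  · intro X Y _ _
    simp only [g]
    congr 1
    refine Finset.sum_congr rfl fun i _ => Finset.sum_congr rfl fun j _ => by ring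
  · intro X _ hne
    have hex : ∃ i j, X i j ≠ 0 := by
      by_contra h
      push_neg at h
      exact hne (by ext i j; simp [h])
    obtain ⟨i0, j0, hij⟩ := hex
    show 0 < (1 / (u' 1 * v' 1)) *
        ∑ i, ∑ j, divDiff' u u' (d i) (d j) * divDiff' v v' (d i) (d j) * X i j * X i j
    rw [Finset.mul_sum]
    simp_rw [Finset.mul_sum]
    have hterm : ∀ i j : Fin n,
        1 / (u' 1 * v' 1) *
          (divDiff' u u' (d i) (d j) * divDiff' v v' (d i) (d j) * X i j * X i j) =
        ((u' 1 * divDiff' u u' (d i) (d j)) * (v' 1 * divDiff' v v' (d i) (d j)) *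
          (X i j * X i j)) * (1 / (u' 1 * v' 1))^2 := by
      intro i j
      field_simp
    have hnonneg : ∀ i j : Fin n, 0 ≤ 1 / (u' 1 * v' 1) *
        (divDiff' u u' (d i) (d j) * divDiff' v v' (d i) (d j) * X i j * X i j) := by
      intro i j
      rw [hterm]
      have hu' := key_divDiff u u' hu hus (hd i) (hd j)
      have hv' := key_divDiff v v' hv hvs (hd i) (hd j)
      exact mul_nonneg (mul_nonneg (mul_nonneg hu'.le hv'.le) (mul_self_nonneg _))
        (sq_nonneg _)
    refine Finset.sum_pos' (fun i _ => Finset.sum_nonneg fun j _ => hnonneg i j)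
      ⟨i0, Finset.mem_univ _, ?_⟩
    refine Finset.sum_pos' (fun j _ => hnonneg i0 j) ⟨j0, Finset.mem_univ _, ?_⟩
    rw [hterm]
    have hu' := key_divDiff u u' hu hus (hd i0) (hd j0)
    have hv' := key_divDiff v v' hv hvs (hd i0) (hd j0)
    have hX : 0 < X i0 j0 * X i0 j0 := mul_self_pos.mpr hij
    have hc : u' 1 * v' 1 ≠ 0 := mul_ne_zero hu1 hv1
    have hsq : 0 < (1 / (u' 1 * v' 1))^2 := by positivity
    exact mul_pos (mul_pos (mul_pos hu' hv') hX) hsq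
end

section
/- For p ≤ 1, p ≠ 0, p ≠ 1, the function F : (0,∞) \ {1} → ℝ defined by F(t) = (t^p + 1) · (p(t-1)/(t^p - 1))², extended by continuity at t = 1 by F(1) = 2, is non-decreasing on (0,∞). -/
open Real Set Filter Topology

-- L2 : 1 - 1/x ≤ log x  for x > 0
lemma L2 {x : ℝ} (hx : 0 < x) : 1 - x⁻¹ ≤ Real.log x := by
  have h := Real.log_le_sub_one_of_pos (x := x⁻¹) (by positivity)
  rw [Real.log_inv] at h
  linarith

-- L3 : log x ≤ (x - 1/x)/2 for 1 ≤ x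
lemma L3 {x : ℝ} (hx : 1 ≤ x) : Real.log x ≤ (x - x⁻¹) / 2 := by
  have hmono : MonotoneOn (fun y : ℝ => (y - y⁻¹) / 2 - Real.log y) (Ici 1) := by
    apply monotoneOn_of_deriv_nonneg (convex_Ici 1)
    · fun_prop (disch := intro y hy; simp at hy ⊢; nlinarith)
    · intro y hy
      rw [interior_Ici] at hy
      have hy0 : (0:ℝ) < y := lt_trans one_pos hy
      exact (((hasDerivAt_id y).sub ((hasDerivAt_inv hy0.ne').congr_deriv rfl)).div_const 2
        |>.sub (Real.hasDerivAt_log hy0.ne')).differentiableAt.differentiableWithinAt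
    · intro y hy
      rw [interior_Ici] at hy
      have hy0 : (0:ℝ) < y := lt_trans one_pos hy
      have h : HasDerivAt (fun y : ℝ => (y - y⁻¹) / 2 - Real.log y)
          ((1 - (-(y^2)⁻¹)) / 2 - y⁻¹) y := by
        exact (((hasDerivAt_id y).sub (hasDerivAt_inv hy0.ne')).div_const 2).sub
          (Real.hasDerivAt_log hy0.ne')
      rw [h.deriv]
      have : (1 - (-(y^2)⁻¹)) / 2 - y⁻¹ = (y-1)^2 / (2*y^2) := by
        field_simp
        ring
      rw [this]
      positivity
  have := hmono (self_mem_Ici) hx hx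
  simp at this
  linarith

-- L4 : 2(x-1)/(x+1) ≤ log x for 1 ≤ x
lemma L4 {x : ℝ} (hx : 1 ≤ x) : 2*(x-1)/(x+1) ≤ Real.log x := by
  have hmono : MonotoneOn (fun y : ℝ => Real.log y - 2*(y-1)/(y+1)) (Ici 1) := by
    apply monotoneOn_of_deriv_nonneg (convex_Ici 1)
    · fun_prop (disch := intro y hy; simp at hy ⊢; nlinarith)
    · intro y hy
      rw [interior_Ici] at hy
      have hy0 : (0:ℝ) < y := lt_trans one_pos hy
      have hy1 : y + 1 ≠ 0 := by nlinarith
      exact ((Real.hasDerivAt_log hy0.ne').sub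
        ((((hasDerivAt_id y).sub_const 1).const_mul 2).div ((hasDerivAt_id y).add_const 1)
        hy1)).differentiableAt.differentiableWithinAt
    · intro y hy
      rw [interior_Ici] at hy
      have hy0 : (0:ℝ) < y := lt_trans one_pos hy
      have hy1 : y + 1 ≠ 0 := by nlinarith
      have h : HasDerivAt (fun y : ℝ => Real.log y - 2*(y-1)/(y+1))
          (y⁻¹ - (2*1*(y+1) - 2*(y-1)*1)/(y+1)^2) y :=
        (Real.hasDerivAt_log hy0.ne').sub
          ((((hasDerivAt_id y).sub_const 1).const_mul 2).div ((hasDerivAt_id y).add_const 1) hy1)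
      rw [h.deriv]
      have : y⁻¹ - (2*1*(y+1) - 2*(y-1)*1)/(y+1)^2 = (y-1)^2/(y*(y+1)^2) := by
        field_simp
        ring
      rw [this]
      positivity
  have := hmono (self_mem_Ici) hx hx
  simp at this
  linarith


-- g̃(x) = log x * ((x+1)/(x-1)) is monotone on Ioi 1
lemma gmono : MonotoneOn (fun x : ℝ => Real.log x * ((x+1)/(x-1))) (Ioi 1) := by
  apply monotoneOn_of_deriv_nonneg (convex_Ioi 1)
  · apply ContinuousOn.mul
    · exact fun y hy => (Real.continuousAt_log (by simp at hy; positivity)).continuousWithinAt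
    · apply ContinuousOn.div
      · fun_prop
      · fun_prop
      · intro y hy; simp at hy; intro h; nlinarith
  · intro y hy
    rw [interior_Ioi] at hy
    simp only [mem_Ioi] at hy
    have hy0 : (0:ℝ) < y := lt_trans one_pos hy
    have hy1 : y - 1 ≠ 0 := by intro h; nlinarith
    exact ((Real.hasDerivAt_log hy0.ne').mul
      (((hasDerivAt_id y).add_const 1).div ((hasDerivAt_id y).sub_const 1)
      hy1)).differentiableAt.differentiableWithinAt
  · intro y hy
    rw [interior_Ioi] at hy
    simp only [mem_Ioi] at hy
    have hy0 : (0:ℝ) < y := lt_trans one_pos hy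
    have hy1 : y - 1 ≠ 0 := by intro h; nlinarith
    have h : HasDerivAt (fun x : ℝ => Real.log x * ((x+1)/(x-1)))
        (y⁻¹ * ((y+1)/(y-1)) + Real.log y * ((1*(y-1) - (y+1)*1)/(y-1)^2)) y :=
      (Real.hasDerivAt_log hy0.ne').mul
        (((hasDerivAt_id y).add_const 1).div ((hasDerivAt_id y).sub_const 1) hy1)
    rw [h.deriv]
    have hlog := L3 hy.le
    have h2 : (1*(y-1) - (y+1)*1)/(y-1)^2 = -2/(y-1)^2 := by field_simp; ring
    rw [h2]
    -- y⁻¹*((y+1)/(y-1)) - 2*log y/(y-1)^2 ≥ 0  ⟸ 2 log y ≤ (y²-1)/y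
    have key : Real.log y * (2/(y-1)^2) ≤ y⁻¹ * ((y+1)/(y-1)) := by
      have hstep : Real.log y ≤ (y - y⁻¹)/2 := L3 hy.le
      have e1 : y⁻¹ * ((y+1)/(y-1)) = ((y - y⁻¹)/2) * (2/(y-1)^2) := by
        field_simp; ring
      rw [e1]
      apply mul_le_mul_of_nonneg_right hstep (by positivity)
    have e2 : Real.log y * (-2/(y-1)^2) = -(Real.log y * (2/(y-1)^2)) := by ring
    rw [e2]
    linarith [key]


-- Case 1 : 0 < p < 1, 1 < t
lemma N1 {p t : ℝ} (hp : 0 < p) (hp1 : p < 1) (ht : 1 < t) :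
    0 ≤ 2*t*((t^p)^2-1) - p*t^p*(t-1)*(t^p+3) := by
  set a := t^p with ha
  have ht0 : (0:ℝ) < t := lt_trans one_pos ht
  have ha1 : 1 < a := Real.one_lt_rpow ht hp
  have hat : a ≤ t := by
    calc a = t^p := rfl
    _ ≤ t^(1:ℝ) := by
        apply Real.rpow_le_rpow_left_iff ht |>.2 hp1.le
    _ = t := Real.rpow_one t
  have hg : Real.log a * ((a+1)/(a-1)) ≤ Real.log t * ((t+1)/(t-1)) :=
    gmono (mem_Ioi.2 ha1) (mem_Ioi.2 (lt_of_lt_of_le ha1 hat)) hat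
  rw [ha, Real.log_rpow ht0] at hg
  have hlt : 0 < Real.log t := Real.log_pos ht
  have h6 : p * ((a+1)/(a-1)) ≤ (t+1)/(t-1) := by
    have h := hg
    have e : p * Real.log t * ((a + 1) / (a - 1)) = Real.log t * (p * ((a+1)/(a-1))) := by ring
    rw [e] at h
    exact le_of_mul_le_mul_left (by linarith [h]) hlt
  have h7 : p*(a+1)*(t-1) ≤ (t+1)*(a-1) := by
    rw [show p * ((a+1)/(a-1)) = (p*(a+1))/(a-1) by ring] at h6
    rw [div_le_div_iff₀ (by linarith) (by linarith)] at h6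
    linarith [h6]
  nlinarith [mul_le_mul_of_nonneg_right h7 (by linarith : (0:ℝ) ≤ a+1),
    mul_nonneg (mul_nonneg (by linarith : (0:ℝ) ≤ t-1) (by linarith : (0:ℝ) ≤ a-1))
      (by linarith : (0:ℝ) ≤ a+1-p)]

-- Case 2 : 0 < p < 1, 0 < t < 1
lemma N2 {p t : ℝ} (hp : 0 < p) (hp1 : p < 1) (ht0 : 0 < t) (ht : t < 1) :
    0 ≤ 2*t*((t^p)^2-1) - p*t^p*(t-1)*(t^p+3) := by
  set a := t^p with ha
  have ha0 : 0 < a := Real.rpow_pos_of_pos ht0 _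
  have ha1 : a < 1 := Real.rpow_lt_one ht0.le ht hp
  -- Bernoulli : a⁻¹ = (1/t)^p ≤ (1-p) + p * t⁻¹
  have hbern : a⁻¹ ≤ (1-p) + p * t⁻¹ := by
    have h := Real.geom_mean_le_arith_mean2_weighted (by linarith : (0:ℝ) ≤ 1-p) hp.le
      zero_le_one ((inv_pos.2 ht0).le) (by ring)
    rw [Real.one_rpow, one_mul] at h
    calc a⁻¹ = (t⁻¹)^p := by rw [Real.inv_rpow ht0.le, ← ha]
    _ ≤ (1-p)*1 + p*t⁻¹ := h
    _ = (1-p) + p*t⁻¹ := by ring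
  have hb : t*(1-a) ≤ a*p*(1-t) := by
    have h2 := mul_le_mul_of_nonneg_left hbern (mul_nonneg ha0.le ht0.le)
    rw [show a*t*a⁻¹ = t*(a*a⁻¹) by ring, mul_inv_cancel₀ ha0.ne', mul_one] at h2
    have e : a*t*((1-p) + p*t⁻¹) = a*t*(1-p) + a*p*(t*t⁻¹) := by ring
    rw [e, mul_inv_cancel₀ ht0.ne', mul_one] at h2
    nlinarith [h2]
  nlinarith [mul_le_mul_of_nonneg_right hb (by linarith : (0:ℝ) ≤ 2*(1+a)),
    mul_nonneg (mul_nonneg (mul_nonneg ha0.le hp.le) (by linarith : (0:ℝ) ≤ 1-t))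
      (by linarith : (0:ℝ) ≤ 1-a)]

-- Case 3 : p < 0, 1 < t
lemma N3 {p t : ℝ} (hp : p < 0) (ht : 1 < t) :
    2*t*((t^p)^2-1) - p*t^p*(t-1)*(t^p+3) ≤ 0 := by
  set a := t^p with ha
  have ht0 : (0:ℝ) < t := lt_trans one_pos ht
  have ha0 : 0 < a := Real.rpow_pos_of_pos ht0 _
  have ha1 : a < 1 := Real.rpow_lt_one_of_one_lt_of_neg ht hp
  have hA : t - 1 ≤ t * Real.log t := by
    have := L2 ht0
    have h2 := mul_le_mul_of_nonneg_left this ht0.le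
    rw [mul_sub, mul_inv_cancel₀ ht0.ne', mul_one] at h2
    linarith
  have hC : (-p) * Real.log t = Real.log a⁻¹ := by
    rw [Real.log_inv, ha, Real.log_rpow ht0]; ring
  have hB : 2*a*Real.log a⁻¹ ≤ 1 - a^2 := by
    have h3 := L3 (x := a⁻¹) (by rw [le_inv_comm₀] <;> [skip; exact one_pos; exact ha0] <;> linarith)
    rw [inv_inv] at h3
    have h4 := mul_le_mul_of_nonneg_left h3 (by linarith : (0:ℝ) ≤ 2*a)
    calc 2*a*Real.log a⁻¹ ≤ 2*a*((a⁻¹-a)/2) := h4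
    _ = a*a⁻¹ - a^2 := by ring
    _ = 1 - a^2 := by rw [mul_inv_cancel₀ ha0.ne']
  -- chain : (-p)*(t-1)*(2*a) ≤ t*(1-a^2)
  have hchain : (-p)*(t-1)*(2*a) ≤ t*(1-a^2) := by
    have h5 : (-p)*(t-1) ≤ (-p)*(t*Real.log t) :=
      mul_le_mul_of_nonneg_left hA (by linarith)
    have h6 : (-p)*(t*Real.log t) = t*(Real.log a⁻¹) := by rw [← hC]; ring
    have h7 := mul_le_mul_of_nonneg_left hB ht0.le
    nlinarith [h5, h7]
  nlinarith [hchain, mul_nonneg (mul_nonneg (mul_nonneg (by linarith : (0:ℝ) ≤ -p)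
    (by linarith : (0:ℝ) ≤ t-1)) ha0.le) (by linarith : (0:ℝ) ≤ 1-a)]

-- Case 4 : p < 0, 0 < t < 1
lemma N4 {p t : ℝ} (hp : p < 0) (ht0 : 0 < t) (ht : t < 1) :
    2*t*((t^p)^2-1) - p*t^p*(t-1)*(t^p+3) ≤ 0 := by
  set a := t^p with ha
  have ha1 : 1 < a := by
    rw [ha]
    exact Real.one_lt_rpow_iff_of_pos ht0 |>.2 (Or.inr ⟨ht, hp⟩)
  have ha0 : (0:ℝ) < a := lt_trans one_pos ha1
  have hA : t * Real.log t⁻¹ ≤ 1 - t := by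
    have := Real.log_le_sub_one_of_pos (x := t⁻¹) (by positivity)
    have h2 := mul_le_mul_of_nonneg_left this ht0.le
    rw [mul_sub, mul_inv_cancel₀ ht0.ne', mul_one] at h2
    linarith
  have hC : (-p) * Real.log t⁻¹ = Real.log a := by
    rw [Real.log_inv, ha, Real.log_rpow ht0]; ring
  have hD : 2*(a-1) ≤ (a+1)*Real.log a := by
    have := L4 ha1.le
    rw [div_le_iff₀ (by linarith : (0:ℝ) < a+1)] at this
    linarith [this]
  have hlog : 0 ≤ Real.log a := Real.log_nonneg ha1.le
  -- a*(a+3)*t*log a ≤ (-p)*a*(a+3)*(1-t)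
  have hchain : a*(a+3)*t*Real.log a ≤ (-p)*a*(a+3)*(1-t) := by
    have h5 := mul_le_mul_of_nonneg_left hA
      (mul_nonneg (mul_nonneg (by linarith : (0:ℝ) ≤ -p) ha0.le) (by linarith : (0:ℝ) ≤ a+3))
    calc a*(a+3)*t*Real.log a = (-p)*a*(a+3)*(t*Real.log t⁻¹) := by rw [← hC]; ring
    _ ≤ (-p)*a*(a+3)*(1-t) := h5
  -- 2*t*(a^2-1) ≤ a*(a+3)*t*log a
  have hlow : 2*t*(a^2-1) ≤ a*(a+3)*t*Real.log a := by
    nlinarith [mul_le_mul_of_nonneg_left hD (mul_nonneg ht0.le (by linarith : (0:ℝ) ≤ a+1)),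
      mul_nonneg (mul_nonneg ht0.le hlog) (sq_nonneg (a-1))]
  nlinarith [hchain, hlow]


lemma rpow_ne_one {p t : ℝ} (hp0 : p ≠ 0) (ht0 : 0 < t) (htne : t ≠ 1) : t^p ≠ 1 := by
  intro h
  have h2 := congrArg Real.log h
  rw [Real.log_rpow ht0, Real.log_one] at h2
  rcases mul_eq_zero.1 h2 with h3 | h3
  · exact hp0 h3
  · rcases Real.log_eq_zero.1 h3 with h4 | h4 | h4 <;> [exact ht0.ne' h4; exact htne h4; linarith]

lemma fderivF {p t : ℝ} (hp0 : p ≠ 0) (ht0 : 0 < t) (htne : t ≠ 1) :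
    HasDerivAt (fun x : ℝ => (x ^ p + 1) * (p * (x - 1) / (x ^ p - 1)) ^ 2)
      (p^2*(t-1)*(2*t*((t^p)^2-1) - p*t^p*(t-1)*(t^p+3)) / (t*(t^p-1)^3)) t := by
  have hane : t^p - 1 ≠ 0 := sub_ne_zero.2 (rpow_ne_one hp0 ht0 htne)
  have ha : HasDerivAt (fun x : ℝ => x^p) (p * t^(p-1)) t :=
    Real.hasDerivAt_rpow_const (Or.inl ht0.ne')
  have hnum : HasDerivAt (fun x : ℝ => p * (x - 1)) p t := by
    simpa using ((hasDerivAt_id t).sub_const 1).const_mul p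
  have hr : HasDerivAt (fun x : ℝ => p * (x - 1) / (x ^ p - 1))
      ((p * (t^p-1) - p*(t-1) * (p * t^(p-1))) / (t^p-1)^2) t :=
    hnum.div (ha.sub_const 1) hane
  have hsq : HasDerivAt (fun x : ℝ => (p * (x - 1) / (x ^ p - 1)) ^ 2)
      (2 * (p * (t - 1) / (t ^ p - 1)) ^ 1 * ((p * (t^p-1) - p*(t-1) * (p * t^(p-1))) / (t^p-1)^2)) t :=
    hr.pow 2
  have h := (ha.add_const 1).mul hsq
  refine h.congr_deriv ?_
  have hts : t^(p-1) = t^p / t := by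
    rw [Real.rpow_sub ht0, Real.rpow_one]
  rw [hts]
  field_simp
  ring

lemma derivsign {p t : ℝ} (hp1 : p ≤ 1) (hp0 : p ≠ 0) (hp1' : p ≠ 1) (ht0 : 0 < t)
    (htne : t ≠ 1) :
    0 ≤ p^2*(t-1)*(2*t*((t^p)^2-1) - p*t^p*(t-1)*(t^p+3)) / (t*(t^p-1)^3) := by
  have hane : t^p ≠ 1 := rpow_ne_one hp0 ht0 htne
  have hp2 : (0:ℝ) ≤ p^2 := sq_nonneg p
  have hcube_pos : ∀ x : ℝ, 1 < x → 0 < (x-1)^3 := fun x hx =>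
    pow_pos (by linarith) 3
  have hcube_neg : ∀ x : ℝ, 0 < x → x < 1 → (x-1)^3 < 0 := fun x hx0 hx => by
    have h1 : (x-1)^3 = (x-1)*(x-1)^2 := by ring
    rw [h1]
    exact mul_neg_of_neg_of_pos (by linarith) (pow_two_pos_of_ne_zero (by intro h; nlinarith))
  rcases lt_or_gt_of_ne hp0 with hpneg | hppos
  · rcases lt_or_gt_of_ne htne with htlt | htgt
    · -- p < 0, t < 1 : a > 1, numerator ≥ 0, denom > 0
      have ha1 : 1 < t^p := Real.one_lt_rpow_iff_of_pos ht0 |>.2 (Or.inr ⟨htlt, hpneg⟩)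
      apply div_nonneg
      · have hN := N4 hpneg ht0 htlt
        nlinarith [mul_nonneg hp2 (mul_nonneg (by linarith : (0:ℝ) ≤ 1-t) (by linarith [hN] : (0:ℝ) ≤ -(2*t*((t^p)^2-1) - p*t^p*(t-1)*(t^p+3))))]
      · have := hcube_pos _ ha1
        positivity
    · -- p < 0, t > 1 : a < 1, numerator ≤ 0, denom < 0
      have ha1 : t^p < 1 := Real.rpow_lt_one_of_one_lt_of_neg htgt hpneg
      have ha0 : 0 < t^p := Real.rpow_pos_of_pos ht0 _
      have hden : t*(t^p-1)^3 < 0 := mul_neg_of_pos_of_neg ht0 (hcube_neg _ ha0 ha1)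
      have hN := N3 hpneg htgt
      apply div_nonneg_of_nonpos _ hden.le
      nlinarith [mul_nonneg hp2 (mul_nonneg (by linarith : (0:ℝ) ≤ t-1) (by linarith [hN] : (0:ℝ) ≤ -(2*t*((t^p)^2-1) - p*t^p*(t-1)*(t^p+3))))]
  · have hplt1 : p < 1 := lt_of_le_of_ne hp1 hp1'
    rcases lt_or_gt_of_ne htne with htlt | htgt
    · -- 0 < p < 1, t < 1 : a < 1, numerator ≤ 0, denom < 0
      have ha1 : t^p < 1 := Real.rpow_lt_one ht0.le htlt hppos
      have ha0 : 0 < t^p := Real.rpow_pos_of_pos ht0 _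
      have hden : t*(t^p-1)^3 < 0 := mul_neg_of_pos_of_neg ht0 (hcube_neg _ ha0 ha1)
      have hN := N2 hppos hplt1 ht0 htlt
      apply div_nonneg_of_nonpos _ hden.le
      nlinarith [mul_nonneg hp2 (mul_nonneg (by linarith : (0:ℝ) ≤ 1-t) hN)]
    · -- 0 < p < 1, t > 1
      have ha1 : 1 < t^p := Real.one_lt_rpow htgt hppos
      have hN := N1 hppos hplt1 htgt
      apply div_nonneg
      · nlinarith [mul_nonneg hp2 (mul_nonneg (by linarith : (0:ℝ) ≤ t-1) hN)]
      · have := hcube_pos _ ha1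
        positivity


/-- limit of f at 1 is 2 -/
lemma ftendsto {p : ℝ} (hp0 : p ≠ 0) :
    Tendsto (fun t : ℝ => (t ^ p + 1) * (p * (t - 1) / (t ^ p - 1)) ^ 2) (𝓝[≠] (1:ℝ)) (𝓝 2) := by
  have hd : HasDerivAt (fun x : ℝ => x^p) p 1 := by
    simpa using Real.hasDerivAt_rpow_const (x := (1:ℝ)) (p := p) (Or.inl one_ne_zero)
  have hslope : Tendsto (slope (fun x : ℝ => x^p) 1) (𝓝[≠] (1:ℝ)) (𝓝 p) :=
    hasDerivAt_iff_tendsto_slope.1 hd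
  have hratio : Tendsto (fun t : ℝ => p * (t - 1) / (t ^ p - 1)) (𝓝[≠] (1:ℝ)) (𝓝 1) := by
    have hq : Tendsto (fun t : ℝ => p / slope (fun x : ℝ => x^p) 1 t) (𝓝[≠] (1:ℝ)) (𝓝 (p / p)) :=
      tendsto_const_nhds.div hslope hp0
    rw [div_self hp0] at hq
    apply hq.congr'
    filter_upwards [self_mem_nhdsWithin] with t ht
    have ht1 : t - 1 ≠ 0 := sub_ne_zero.2 ht
    rw [slope_def_field]
    rw [Real.one_rpow]
    rw [div_div_eq_mul_div]
  have hbase : Tendsto (fun t : ℝ => t ^ p + 1) (𝓝[≠] (1:ℝ)) (𝓝 2) := by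
    have hc : ContinuousAt (fun t : ℝ => t ^ p) 1 :=
      Real.continuousAt_rpow_const 1 p (Or.inl one_ne_zero)
    have h1 : Tendsto (fun t : ℝ => t ^ p) (𝓝[≠] (1:ℝ)) (𝓝 ((1:ℝ)^p)) :=
      hc.tendsto.mono_left nhdsWithin_le_nhds
    rw [Real.one_rpow] at h1
    have h2 : Tendsto (fun t : ℝ => t ^ p + 1) (𝓝[≠] (1:ℝ)) (𝓝 (1+1)) :=
      h1.add tendsto_const_nhds
    norm_num at h2
    exact h2
  have := hbase.mul (hratio.pow 2)
  simpa using this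


/-- For `p ≤ 1`, `p ≠ 0`, `p ≠ 1`, the function
`F(t) = (t^p + 1)(p(t-1)/(t^p-1))²` (with `F(1) = 2`) is non-decreasing on `(0,∞)`. -/
theorem F_monotone (p : ℝ) (hp1 : p ≤ 1) (hp0 : p ≠ 0) (hp1' : p ≠ 1) :
    MonotoneOn (fun t : ℝ => if t = 1 then 2 else
      (t ^ p + 1) * (p * (t - 1) / (t ^ p - 1)) ^ 2) (Set.Ioi (0:ℝ)) := by
  set f : ℝ → ℝ := fun t => (t ^ p + 1) * (p * (t - 1) / (t ^ p - 1)) ^ 2 with hf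
  set F : ℝ → ℝ := fun t => if t = 1 then 2 else f t with hF
  -- F agrees with f near any x ≠ 1
  have hFeq : ∀ x : ℝ, x ≠ 1 → F =ᶠ[𝓝 x] f := by
    intro x hx
    filter_upwards [isOpen_ne.mem_nhds hx] with y hy
    simp only [hF, if_neg hy]
  -- F has nonneg derivative at points of (0,∞) \ {1}
  have hD : ∀ x : ℝ, 0 < x → x ≠ 1 →
      HasDerivAt F (p^2*(x-1)*(2*x*((x^p)^2-1) - p*x^p*(x-1)*(x^p+3)) / (x*(x^p-1)^3)) x := by
    intro x hx0 hx1
    exact (fderivF hp0 hx0 hx1).congr_of_eventuallyEq (hFeq x hx1)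
  -- continuity of F within a set at 1
  have hcont1 : ∀ s : Set ℝ, ContinuousWithinAt F s 1 := by
    intro s
    rw [← continuousWithinAt_diff_self]
    unfold ContinuousWithinAt
    have hF1 : F 1 = 2 := by simp [hF]
    rw [hF1]
    have hmono : 𝓝[s \ {1}] (1:ℝ) ≤ 𝓝[≠] (1:ℝ) :=
      nhdsWithin_mono 1 (fun y hy => hy.2)
    apply Tendsto.congr' _ ((ftendsto hp0).mono_left hmono)
    filter_upwards [self_mem_nhdsWithin] with y hy
    simp only [hF, hf, if_neg (by exact hy.2 : y ≠ 1)]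
  have hcontF : ∀ x : ℝ, 0 < x → x ≠ 1 → ContinuousAt F x := fun x hx0 hx1 =>
    (hD x hx0 hx1).continuousAt
  -- monotone on Ioc 0 1
  have M1 : MonotoneOn F (Ioc (0:ℝ) 1) := by
    apply monotoneOn_of_deriv_nonneg (convex_Ioc 0 1)
    · intro x hx
      rcases eq_or_ne x 1 with h | h
      · rw [h]; exact hcont1 _
      · exact (hcontF x hx.1 h).continuousWithinAt
    · intro x hx
      rw [interior_Ioc] at hx
      exact (hD x hx.1 (ne_of_lt hx.2)).differentiableAt.differentiableWithinAt
    · intro x hx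
      rw [interior_Ioc] at hx
      rw [(hD x hx.1 (ne_of_lt hx.2)).deriv]
      exact derivsign hp1 hp0 hp1' hx.1 (ne_of_lt hx.2)
  -- monotone on Ici 1
  have M2 : MonotoneOn F (Ici (1:ℝ)) := by
    apply monotoneOn_of_deriv_nonneg (convex_Ici 1)
    · intro x hx
      rcases eq_or_ne x 1 with h | h
      · rw [h]; exact hcont1 _
      · exact (hcontF x (lt_of_lt_of_le one_pos hx) h).continuousWithinAt
    · intro x hx
      rw [interior_Ici] at hx
      exact (hD x (lt_trans one_pos hx) (ne_of_gt hx)).differentiableAt.differentiableWithinAt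
    · intro x hx
      rw [interior_Ici] at hx
      rw [(hD x (lt_trans one_pos hx) (ne_of_gt hx)).deriv]
      exact derivsign hp1 hp0 hp1' (lt_trans one_pos hx) (ne_of_gt hx)
  -- glue
  intro x hx y hy hxy
  simp only [mem_Ioi] at hx hy
  rcases le_or_gt y 1 with hy1 | hy1
  · exact M1 ⟨hx, le_trans hxy hy1⟩ ⟨hy, hy1⟩ hxy
  · rcases le_or_gt x 1 with hx1 | hx1
    · calc F x ≤ F 1 := M1 ⟨hx, hx1⟩ ⟨one_pos, le_refl 1⟩ hx1
      _ ≤ F y := M2 (self_mem_Ici) hy1.le hy1.le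
    · exact M2 hx1.le hy1.le hxy
end

section
/- For p > 1, the function F(t) = (t^p + 1)·(p(t-1)/(t^p-1))² (extended by continuity where t^p = 1) is not non-decreasing on (0,∞); in particular if p > 1 then the right-derivative behavior near 0 forces F to be decreasing somewhere on (0,∞). -/
/-!
As `t → 0⁺` we have `t ^ p → 0`, so `F t → p ^ 2`. A monotone function on `(0, ∞)` lies above its
right limit at `0`, yet for small `t` we have `t ^ p ≤ t / 4`, which pushes `F t` strictly below
`p ^ 2`.
-/

open Filter Topology Set

noncomputable def F (p t : ℝ) : ℝ :=
  if t = 1 then 2 else (t ^ p + 1) * (p * (t - 1) / (t ^ p - 1)) ^ 2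

theorem MonotoneOn.le_of_tendsto_nhdsGT {α β : Type*} [LinearOrder α] [TopologicalSpace α]
    [OrderTopology α] [DenselyOrdered α] [Preorder β] [TopologicalSpace β] [ClosedIicTopology β]
    {f : α → β} {a t : α} {L : β} (hf : MonotoneOn f (Ioi a))
    (hL : Tendsto f (𝓝[>] a) (𝓝 L)) (ht : a < t) : L ≤ f t := by
  have : (𝓝[>] a).NeBot := nhdsGT_neBot_of_exists_gt ⟨t, ht⟩
  refine le_of_tendsto hL ?_
  filter_upwards [Ioo_mem_nhdsGT ht] with s hs
  exact hf hs.1 (mem_Ioi.2 ht) hs.2.le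

theorem tendsto_rpow_nhdsGT_zero {q : ℝ} (hq : 0 < q) :
    Tendsto (fun t : ℝ => t ^ q) (𝓝[>] 0) (𝓝 0) := by
  simpa [Real.zero_rpow hq.ne'] using
    (Real.continuousAt_rpow_const 0 q (Or.inr hq.le)).continuousWithinAt.tendsto

theorem tendsto_F_nhdsGT_zero {p : ℝ} (hp : 0 < p) : Tendsto (F p) (𝓝[>] 0) (𝓝 (p ^ 2)) := by
  have hpow := tendsto_rpow_nhdsGT_zero hp
  have hlim : Tendsto (fun t : ℝ => (t ^ p + 1) * (p * (t - 1) / (t ^ p - 1)) ^ 2) (𝓝[>] 0)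
      (𝓝 ((0 + 1) * (p * (0 - 1) / (0 - 1)) ^ 2)) :=
    (hpow.add_const 1).mul
      ((((tendsto_nhdsWithin_of_tendsto_nhds (tendsto_id.sub_const 1)).const_mul p).div
        (hpow.sub_const 1) (by norm_num)).pow 2)
  have hvalue : ((0 : ℝ) + 1) * (p * (0 - 1) / (0 - 1)) ^ 2 = p ^ 2 := by norm_num
  rw [hvalue] at hlim
  refine hlim.congr' ?_
  filter_upwards [Ioo_mem_nhdsGT (zero_lt_one' ℝ)] with t ht
  simp [F, ht.2.ne]

theorem add_one_mul_div_sub_one_sq_lt_sq {p t x : ℝ} (hp : p ≠ 0) (ht : 0 < t)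
    (ht_half : t ≤ 1 / 2) (hx : 0 ≤ x) (hxt : x ≤ t / 4) :
    (x + 1) * (p * (t - 1) / (x - 1)) ^ 2 < p ^ 2 := by
  have hx1 : 0 < (x - 1) ^ 2 := by nlinarith
  -- the difference of the two sides is at most `3x - 2t + t² ≤ -3t/4`
  have hpoly : (x + 1) * (t - 1) ^ 2 < (x - 1) ^ 2 := by
    nlinarith [mul_le_mul_of_nonneg_left (show t ^ 2 ≤ t by nlinarith) hx]
  rw [div_pow, mul_pow, ← mul_div_assoc, div_lt_iff₀ hx1]
  nlinarith [pow_pos (abs_pos.2 hp) 2, sq_abs p]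

theorem eventually_F_lt_sq {p : ℝ} (hp : 1 < p) : ∀ᶠ t in 𝓝[>] 0, F p t < p ^ 2 := by
  filter_upwards
    [(tendsto_rpow_nhdsGT_zero (sub_pos.2 hp)).eventually_lt_const (by norm_num : (0 : ℝ) < 1 / 4),
    Ioo_mem_nhdsGT (by norm_num : (0 : ℝ) < 1 / 2)] with t hsmall ht
  have hsplit : t ^ p = t ^ (p - 1) * t := by
    rw [Real.rpow_sub_one ht.1.ne', div_mul_cancel₀ _ ht.1.ne']
  have hxt : t ^ p ≤ t / 4 := by
    rw [hsplit]; nlinarith [ht.1]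
  rw [F, if_neg (by linarith [ht.2] : t ≠ 1)]
  exact add_one_mul_div_sub_one_sq_lt_sq (by linarith : (0:ℝ) < p).ne' ht.1 ht.2.le
    (Real.rpow_nonneg ht.1.le p) hxt

/-- For `p > 1`, the function `F(t) = (t^p + 1)(p(t-1)/(t^p-1))²` (with `F(1) = 2` by continuity)
is not non-decreasing on `(0,∞)`. -/
theorem F_not_monotone (p : ℝ) (hp : 1 < p) :
    ¬ MonotoneOn (fun t : ℝ => if t = 1 then 2 else
      (t ^ p + 1) * (p * (t - 1) / (t ^ p - 1)) ^ 2) (Set.Ioi (0:ℝ)) := by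
  intro hmono
  obtain ⟨t, hlt, ht⟩ := ((eventually_F_lt_sq hp).and self_mem_nhdsWithin).exists
  exact (hmono.le_of_tendsto_nhdsGT (tendsto_F_nhdsGT_zero (by linarith)) ht).not_gt hlt
end

section
/- Let p < 0 and define g₁(x) = (2−p)x^{p+1} + p·x^p − (p+2)x + p for 0 < x < 1. Then g₁(x) < 0 for all x ∈ (0,1). -/
open Real Set

/-- For `p < 0`, `g₁(x) = (2−p)x^{p+1} + p x^p − (p+2)x + p < 0` for all `x ∈ (0,1)`. -/
theorem g1_neg (p : ℝ) (hp : p < 0) (x : ℝ) (hx : x ∈ Set.Ioo (0:ℝ) 1) :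
    (2 - p) * x ^ (p + 1) + p * x ^ p - (p + 2) * x + p < 0 := by
  obtain ⟨hx0, hx1⟩ := hx
  set h : ℝ → ℝ := fun y => (2 - p) * y ^ (p + 1) + p * y ^ p - (p + 2) * y + p with hh
  set k : ℝ → ℝ := fun y => (2 - p) * (p + 1) * y ^ p + p * p * y ^ (p - 1) - (p + 2)
    with hk
  -- derivative of h is k on positive reals
  have hderiv_h : ∀ y : ℝ, 0 < y → HasDerivAt h (k y) y := by
    intro y hy
    have h1 : HasDerivAt (fun z : ℝ => z ^ (p + 1)) ((p + 1) * y ^ p) y := by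
      have := Real.hasDerivAt_rpow_const (x := y) (p := p + 1) (Or.inl hy.ne')
      simpa using this
    have h2 : HasDerivAt (fun z : ℝ => z ^ p) (p * y ^ (p - 1)) y :=
      Real.hasDerivAt_rpow_const (Or.inl hy.ne')
    have H := (((h1.const_mul (2 - p)).add (h2.const_mul p)).sub
      ((hasDerivAt_id y).const_mul (p + 2))).add_const p
    refine H.congr_deriv ?_
    simp [hk]; ring
  -- derivative of k is negative on (0,1)
  have hderiv_k : ∀ y : ℝ, 0 < y →
      HasDerivAt k ((2 - p) * (p + 1) * (p * y ^ (p - 1))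
        + p * p * ((p - 1) * y ^ (p - 1 - 1))) y := by
    intro y hy
    have h2 : HasDerivAt (fun z : ℝ => z ^ p) (p * y ^ (p - 1)) y :=
      Real.hasDerivAt_rpow_const (Or.inl hy.ne')
    have h3 : HasDerivAt (fun z : ℝ => z ^ (p - 1)) ((p - 1) * y ^ (p - 1 - 1)) y :=
      Real.hasDerivAt_rpow_const (Or.inl hy.ne')
    have H := ((h2.const_mul ((2 - p) * (p + 1))).add (h3.const_mul (p * p))).sub_const (p + 2)
    exact H
  have hkderiv_neg : ∀ y ∈ Set.Ioo (0:ℝ) 1,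
      (2 - p) * (p + 1) * (p * y ^ (p - 1)) + p * p * ((p - 1) * y ^ (p - 1 - 1)) < 0 := by
    intro y hy
    obtain ⟨hy0, hy1⟩ := hy
    have hA : (0:ℝ) < y ^ (p - 2) := Real.rpow_pos_of_pos hy0 _
    have hsplit : y ^ (p - 1) = y ^ (p - 2) * y := by
      rw [show p - 1 = p - 2 + 1 by ring, Real.rpow_add hy0, Real.rpow_one]
    have hsplit2 : y ^ (p - 1 - 1) = y ^ (p - 2) := by rw [show p - 1 - 1 = p - 2 by ring]
    rw [hsplit, hsplit2]
    have hbracket : 0 < (2 - p) * (p + 1) * y + p * (p - 1) := by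
      rcases le_or_gt 0 ((2 - p) * (p + 1)) with hc | hc
      · nlinarith
      · nlinarith
    calc (2 - p) * (p + 1) * (p * (y ^ (p - 2) * y)) + p * p * ((p - 1) * y ^ (p - 2))
        = p * (y ^ (p - 2) * ((2 - p) * (p + 1) * y + p * (p - 1))) := by ring
      _ < 0 := mul_neg_of_neg_of_pos hp (mul_pos hA hbracket)
  -- k is strictly antitone on (0,1]
  have hanti : StrictAntiOn k (Set.Ioc (0:ℝ) 1) := by
    apply strictAntiOn_of_deriv_neg (convex_Ioc 0 1)
    · intro y hy
      exact (hderiv_k y hy.1).continuousAt.continuousWithinAt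
    · intro y hy
      rw [interior_Ioc] at hy
      rw [(hderiv_k y hy.1).deriv]
      exact hkderiv_neg y hy
  have hk1 : k 1 = 0 := by simp [hk]; ring
  have hkpos : ∀ y ∈ Set.Ioo (0:ℝ) 1, 0 < k y := by
    intro y hy
    have := hanti ⟨hy.1, hy.2.le⟩ ⟨one_pos, le_refl 1⟩ hy.2
    rw [hk1] at this
    exact this
  -- h is strictly monotone on (0,1]
  have hmono : StrictMonoOn h (Set.Ioc (0:ℝ) 1) := by
    apply strictMonoOn_of_deriv_pos (convex_Ioc 0 1)
    · intro y hy
      exact (hderiv_h y hy.1).continuousAt.continuousWithinAt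
    · intro y hy
      rw [interior_Ioc] at hy
      rw [(hderiv_h y hy.1).deriv]
      exact hkpos y hy
  have h1 : h 1 = 0 := by simp [hh]
  have := hmono ⟨hx0, hx1.le⟩ ⟨one_pos, le_refl 1⟩ hx1
  rw [h1] at this
  exact this
end

section
/- Let α, β be nonzero reals with α + β ≠ 0 and set α₀ = (α+β)/2. For commuting positive definite Σ and symmetric X (diagonal), the curve γ(t) = (Σ^{α₀} + t·α₀·Σ^{α₀−1}X)^{1/α₀} satisfies (1/α)·γ(t)^{1−α}·(γ^α)''(t) + (1/β)·γ(t)^{1−β}·(γ^β)''(t) = 0 for all t near 0. -/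
/-!
Writing `u(t) = d^α₀ + t α₀ d^(α₀-1) x`, which is affine in `t`, we have `γ^p = u^(p/α₀)`, so
`(γ^p)'' = (p/α₀)(p/α₀ - 1) u^(p/α₀-2) u'²` and each term `(1/p) γ^(1-p) (γ^p)''` equals
`(1/α₀)(p/α₀ - 1) u^(1/α₀-2) u'²`. This is affine in `p`, and the two terms cancel because
`α + β = 2α₀`.
-/

open Real Filter Topology

lemma eventually_affine_pos {c₀ c₁ t : ℝ} (ht : 0 < c₀ + t * c₁) :
    ∀ᶠ s in 𝓝 t, 0 < c₀ + s * c₁ :=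
  ((by fun_prop : Continuous fun s : ℝ => c₀ + s * c₁).tendsto t).eventually (lt_mem_nhds ht)

lemma deriv_deriv_affine_rpow {c₀ c₁ q t : ℝ} (ht : 0 < c₀ + t * c₁) :
    deriv (deriv fun s => (c₀ + s * c₁) ^ q) t
      = q * (q - 1) * (c₀ + t * c₁) ^ (q - 2) * c₁ ^ 2 := by
  have haffine (s : ℝ) : HasDerivAt (fun s : ℝ => c₀ + s * c₁) c₁ s := by
    simpa using ((hasDerivAt_id s).mul_const c₁).const_add c₀
  have hderiv : deriv (fun s => (c₀ + s * c₁) ^ q) =ᶠ[𝓝 t]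
      fun s => c₁ * q * (c₀ + s * c₁) ^ (q - 1) := by
    filter_upwards [eventually_affine_pos ht] with s hs
    exact ((haffine s).rpow_const (Or.inl hs.ne')).deriv
  rw [hderiv.deriv_eq, (((haffine t).rpow_const (Or.inl ht.ne')).const_mul (c₁ * q)).deriv,
    show q - 1 - 1 = q - 2 by ring]
  ring

lemma one_div_mul_rpow_mul_deriv_deriv_affine_rpow_rpow {c₀ c₁ a p t : ℝ} (hp : p ≠ 0)
    (ht : 0 < c₀ + t * c₁) :
    1 / p * ((c₀ + t * c₁) ^ (1 / a)) ^ (1 - p) *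
        deriv (deriv fun s => ((c₀ + s * c₁) ^ (1 / a)) ^ p) t
      = 1 / a * (p / a - 1) * (c₀ + t * c₁) ^ (1 / a - 2) * c₁ ^ 2 := by
  have hpow {s : ℝ} (hs : 0 < c₀ + s * c₁) (q : ℝ) :
      ((c₀ + s * c₁) ^ (1 / a)) ^ q = (c₀ + s * c₁) ^ (q / a) := by
    rw [← rpow_mul hs.le, one_div_mul_eq_div]
  have hfun : (fun s => ((c₀ + s * c₁) ^ (1 / a)) ^ p) =ᶠ[𝓝 t]
      fun s => (c₀ + s * c₁) ^ (p / a) := by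
    filter_upwards [eventually_affine_pos ht] with s hs
    exact hpow hs p
  have hexp : (c₀ + t * c₁) ^ ((1 - p) / a) * (c₀ + t * c₁) ^ (p / a - 2)
      = (c₀ + t * c₁) ^ (1 / a - 2) := by
    rw [← rpow_add ht]
    ring_nf
  rw [hfun.deriv.deriv_eq, deriv_deriv_affine_rpow ht, hpow ht]
  linear_combination (1 / p * (p / a) * (p / a - 1) * c₁ ^ 2) * hexp
    + (a⁻¹ * (p / a - 1) * (c₀ + t * c₁) ^ (1 / a - 2) * c₁ ^ 2) * inv_mul_cancel₀ hp

theorem mpe_geodesic_equation_general (α β : ℝ) (hα : α ≠ 0) (hβ : β ≠ 0)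
    (d x : ℝ) (hd : 0 < d) :
    let α₀ : ℝ := (α + β) / 2
    let γ : ℝ → ℝ := fun t => (d ^ α₀ + t * α₀ * d ^ (α₀ - 1) * x) ^ (1 / α₀)
    ∀ t : ℝ, 0 < 1 + t * α₀ * d⁻¹ * x →
      (1 / α) * γ t ^ (1 - α) * deriv (deriv (fun s => γ s ^ α)) t +
        (1 / β) * γ t ^ (1 - β) * deriv (deriv (fun s => γ s ^ β)) t = 0 := by
  intro α₀ γ t ht
  set c₁ := α₀ * d ^ (α₀ - 1) * x
  have hγ : γ = fun s => (d ^ α₀ + s * c₁) ^ (1 / α₀) := by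
    funext s
    simp only [γ, c₁, mul_assoc]
  have hu : 0 < d ^ α₀ + t * c₁ := by
    have hfactor : d ^ α₀ + t * c₁ = d ^ α₀ * (1 + t * α₀ * d⁻¹ * x) := by
      simp only [c₁, rpow_sub_one hd.ne']
      ring
    rw [hfactor]
    exact mul_pos (rpow_pos_of_pos hd α₀) ht
  have hsum : α + β = 2 * α₀ := by ring
  rw [hγ, one_div_mul_rpow_mul_deriv_deriv_affine_rpow_rpow hα hu,
    one_div_mul_rpow_mul_deriv_deriv_affine_rpow_rpow hβ hu]
  clear_value c₁ α₀
  -- valid also at `α₀ = 0`, where `α₀⁻¹ = 0`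
  have hinv : α₀⁻¹ * α₀ * α₀⁻¹ = α₀⁻¹ := by simpa only [inv_inv] using mul_inv_mul_cancel α₀⁻¹
  linear_combination ((d ^ α₀ + t * c₁) ^ (1 / α₀ - 2) * c₁ ^ 2) * (α₀⁻¹ ^ 2 * hsum + 2 * hinv)

/-- Entrywise (diagonal) geodesic equation of the mixed-power-Euclidean metric in the
commuting case: with `α, β ≠ 0`, `α + β ≠ 0`, `α₀ = (α+β)/2`, `d > 0`, the curve
`γ(t) = (d^{α₀} + t α₀ d^{α₀−1} x)^{1/α₀}` satisfies
`(1/α) γ(t)^{1−α} (γ^α)''(t) + (1/β) γ(t)^{1−β} (γ^β)''(t) = 0`. -/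
theorem mpe_geodesic_equation (α β : ℝ) (hα : α ≠ 0) (hβ : β ≠ 0) (hαβ : α + β ≠ 0)
    (d x : ℝ) (hd : 0 < d) :
    let α₀ : ℝ := (α + β) / 2
    let γ : ℝ → ℝ := fun t => (d ^ α₀ + t * α₀ * d ^ (α₀ - 1) * x) ^ (1 / α₀)
    ∀ t : ℝ, 0 < 1 + t * α₀ * d⁻¹ * x →
      (1 / α) * γ t ^ (1 - α) * deriv (deriv (fun s => γ s ^ α)) t +
        (1 / β) * γ t ^ (1 - β) * deriv (deriv (fun s => γ s ^ β)) t = 0 :=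
  mpe_geodesic_equation_general α β hα hβ d x hd
end

section
/- For α, β real with α, β, α+β, α−β all nonzero, the (α,β)-divergence on positive reals D(x|y) = (1/(αβ))·[α/(α+β)·x^{α+β} + β/(α+β)·y^{α+β} − x^α y^β] is nonnegative for all x, y > 0, and D(x|y) = 0 if and only if x = y. -/
private lemma young_lt {p s : ℝ} (hp0 : 0 < p) (hp1 : p < 1) (hs : 0 < s) (hs1 : s ≠ 1) :
    s ^ p < p * s + (1 - p) := by
  have h := rpow_one_add_lt_one_add_mul_self (s := s - 1) (by linarith)
    (sub_ne_zero.mpr hs1) hp0 hp1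
  have h1 : 1 + (s - 1) = s := by ring
  rw [h1] at h
  linarith
 
private lemma young_gt {p s : ℝ} (hp : p < 0 ∨ 1 < p) (hs : 0 < s) (hs1 : s ≠ 1) :
    p * s + (1 - p) < s ^ p := by
  rcases hp with hp | hp
  · -- p < 0 : use Bernoulli with exponent q = 1 - p > 1 at 1/s
    set q := 1 - p with hqdef
    have hq : 1 < q := by simp [hqdef]; linarith
    have hu : -1 ≤ s⁻¹ - 1 := by
      have : 0 < s⁻¹ := inv_pos.mpr hs
      linarith
    have hu' : s⁻¹ - 1 ≠ 0 := by
      intro h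
      have : s⁻¹ = 1 := by linarith
      exact hs1 (by field_simp at this; simpa using this.symm)
    have h := one_add_mul_self_lt_rpow_one_add hu hu' hq
    have h1 : 1 + (s⁻¹ - 1) = s⁻¹ := by ring
    rw [h1, Real.inv_rpow hs.le] at h
    -- h : 1 + q * (s⁻¹ - 1) < (s ^ q)⁻¹
    have hsq : 0 < s ^ q := Real.rpow_pos_of_pos hs q
    have h2 := mul_lt_mul_of_pos_left h hs
    have h3 : s * (1 + q * (s⁻¹ - 1)) = s + q - q * s := by field_simp; ring
    have h4 : s ^ p = s * (s ^ q)⁻¹ := by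
      have hpq : p = 1 - q := by rw [hqdef]; ring
      rw [hpq, Real.rpow_sub hs, Real.rpow_one, div_eq_mul_inv]
    rw [h3, ← h4] at h2
    have hps : p * s + (1 - p) = s + q - q * s := by rw [hqdef]; ring
    linarith
  · have h := one_add_mul_self_lt_rpow_one_add (s := s - 1) (by linarith)
      (sub_ne_zero.mpr hs1) hp
    have h1 : 1 + (s - 1) = s := by ring
    rw [h1] at h
    linarith

/-- The scalar `(α,β)`-divergence
`D(x|y) = (1/(αβ)) [α/(α+β) x^{α+β} + β/(α+β) y^{α+β} − x^α y^β]`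
is nonnegative on `(0,∞)²`, vanishing exactly on the diagonal. -/
theorem ab_divergence_nonneg (α β : ℝ) (hα : α ≠ 0) (hβ : β ≠ 0)
    (hαβ : α + β ≠ 0) (hαβ' : α ≠ β) (hαβ'' : α ≠ -β) :
    ∀ x ∈ Set.Ioi (0:ℝ), ∀ y ∈ Set.Ioi (0:ℝ),
      0 ≤ (1 / (α * β)) *
          (α / (α + β) * x ^ (α + β) + β / (α + β) * y ^ (α + β) - x ^ α * y ^ β) ∧
      ((1 / (α * β)) *
          (α / (α + β) * x ^ (α + β) + β / (α + β) * y ^ (α + β) - x ^ α * y ^ β) = 0 ↔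
        x = y) := by
  intro x hx y hy
  simp only [Set.mem_Ioi] at hx hy
  set p := α / (α + β) with hpdef
  have hq : β / (α + β) = 1 - p := by rw [hpdef]; field_simp; ring
  have ht : (0:ℝ) < x / y := div_pos hx hy
  set s := (x / y) ^ (α + β) with hsdef
  have hs : 0 < s := Real.rpow_pos_of_pos ht _
  have hY : 0 < y ^ (α + β) := Real.rpow_pos_of_pos hy _
  have hxab : x ^ (α + β) = s * y ^ (α + β) := by
    rw [hsdef, Real.div_rpow hx.le hy.le, div_mul_cancel₀]
    exact hY.ne'
  have hxa : x ^ α * y ^ β = s ^ p * y ^ (α + β) := by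
    have h1 : x ^ α = (x / y) ^ α * y ^ α := by
      rw [Real.div_rpow hx.le hy.le, div_mul_cancel₀]
      exact (Real.rpow_pos_of_pos hy α).ne'
    have h2 : (x / y) ^ α = s ^ p := by
      rw [hsdef, ← Real.rpow_mul ht.le]
      congr 1
      rw [hpdef]
      field_simp
    rw [h1, h2, mul_assoc, ← Real.rpow_add hy]
  have key : α / (α + β) * x ^ (α + β) + β / (α + β) * y ^ (α + β) - x ^ α * y ^ β
      = y ^ (α + β) * (p * s + (1 - p) - s ^ p) := by
    rw [hxab, hxa, hq]
    ring
  by_cases hxy : x = y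
  · subst hxy
    have hs1 : s = 1 := by rw [hsdef, div_self hx.ne', Real.one_rpow]
    have h0 : p * s + (1 - p) - s ^ p = 0 := by
      rw [hs1, Real.one_rpow]; ring
    have hD0 : (1 / (α * β)) *
        (α / (α + β) * x ^ (α + β) + β / (α + β) * x ^ (α + β) - x ^ α * x ^ β) = 0 := by
      rw [key, h0, mul_zero, mul_zero]
    exact ⟨hD0.ge, iff_of_true hD0 rfl⟩
  · have hs1 : s ≠ 1 := by
      intro h
      apply hxy
      have h2 := congrArg (· ^ (α + β)⁻¹) h
      simp only [hsdef] at h2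
      rw [← Real.rpow_mul ht.le, mul_inv_cancel₀ hαβ, Real.rpow_one, Real.one_rpow] at h2
      field_simp at h2
      exact h2
    have hab : α * β ≠ 0 := mul_ne_zero hα hβ
    have hcp : p * (1 - p) = α * β / (α + β) ^ 2 := by rw [hpdef]; field_simp; ring
    have hDpos : 0 < (1 / (α * β)) *
        (α / (α + β) * x ^ (α + β) + β / (α + β) * y ^ (α + β) - x ^ α * y ^ β) := by
      rw [key]
      rcases lt_or_gt_of_ne hab with hneg | hpos
      · -- α β < 0 : p < 0 or p > 1, inner factor negative
        have hc : p * (1 - p) < 0 := by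
          rw [hcp]
          exact div_neg_of_neg_of_pos hneg (by positivity)
        have hp : p < 0 ∨ 1 < p := by
          rcases lt_trichotomy p 0 with h | h | h
          · exact Or.inl h
          · simp [h] at hc
          · right; nlinarith
        have hE : p * s + (1 - p) - s ^ p < 0 :=
          sub_neg.mpr (young_gt hp hs hs1)
        exact mul_pos_of_neg_of_neg (by simpa using one_div_neg.mpr hneg)
          (mul_neg_of_pos_of_neg hY hE)
      · have hc : 0 < p * (1 - p) := by
          rw [hcp]
          exact div_pos hpos (by positivity)
        have hp0 : 0 < p := by nlinarith
        have hp1 : p < 1 := by nlinarith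
        have hE : 0 < p * s + (1 - p) - s ^ p :=
          sub_pos.mpr (young_lt hp0 hp1 hs hs1)
        exact mul_pos (by simpa using one_div_pos.mpr hpos) (mul_pos hY hE)
    exact ⟨hDpos.le, ⟨fun h => absurd h hDpos.ne', fun h => absurd h hxy⟩⟩
end

section
/- For α ≠ 0, the divergence D(x|y) = (1/α)·[(x^α·ln x − x^α/α) + y^α/α − x^α·ln y] on positive reals is nonnegative, with equality if and only if x = y. -/
/-! With `t = (x/y)^α` the divergence is `y^α / α² · (t log t + 1 - t)`, so the claim is
Gibbs' inequality `t log t + 1 - t ≥ 0`, with equality only at `t = 1`, and `t = 1` iff `x = y`. -/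

open Real InformationTheory

lemma a0_divergence_eq_mul_klFun {α x y : ℝ} (hα : α ≠ 0) (hx : 0 < x) (hy : 0 < y) :
    (1 / α) * ((x ^ α * log x - x ^ α / α) + y ^ α / α - x ^ α * log y) =
      y ^ α / α ^ 2 * klFun ((x / y) ^ α) := by
  have hyα : y ^ α ≠ 0 := (rpow_pos_of_pos hy α).ne'
  rw [klFun_apply, div_rpow hx.le hy.le, log_div (rpow_pos_of_pos hx α).ne' hyα,
    log_rpow hx, log_rpow hy]
  field_simp
  ring

/-- The scalar `(α,0)`-divergence
`D(x|y) = (1/α) [(x^α ln x − x^α/α) + y^α/α − x^α ln y]`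
is nonnegative on `(0,∞)²`, vanishing exactly on the diagonal. -/
theorem a0_divergence_nonneg (α : ℝ) (hα : α ≠ 0) :
    ∀ x ∈ Set.Ioi (0:ℝ), ∀ y ∈ Set.Ioi (0:ℝ),
      0 ≤ (1 / α) * ((x ^ α * Real.log x - x ^ α / α) + y ^ α / α - x ^ α * Real.log y) ∧
      ((1 / α) * ((x ^ α * Real.log x - x ^ α / α) + y ^ α / α - x ^ α * Real.log y) = 0 ↔
        x = y) := by
  intro x (hx : 0 < x) y (hy : 0 < y)
  rw [a0_divergence_eq_mul_klFun hα hx hy]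
  have hscale : 0 < y ^ α / α ^ 2 := by positivity
  have hratio : 0 ≤ (x / y) ^ α := by positivity
  refine ⟨mul_nonneg hscale.le (klFun_nonneg hratio), ?_⟩
  rw [mul_eq_zero, or_iff_right hscale.ne', klFun_eq_zero_iff hratio, ← one_rpow α,
    rpow_left_inj (div_pos hx hy).le zero_le_one hα, div_eq_one_iff_eq hy.ne']
end
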